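/- arXiv:1509.02380 — 3 statements merged into one kernel-verified Lean document; each statement's English description precedes it below -/
import Mathlib

section
/- Fisher–Neyman factorization witnessing that the projection Pτ̂ is a sufficient statistic for the source position x: for every x ∈ ℝ³ and every τ̂ ∈ ℝ^q, the Gaussian density factorizes as exp(−½‖τ̂ − τ*_n(x)‖²_{Σ⁻¹}) / √((2π)^q det Σ) = [exp(−½‖τ̂ − Pτ̂‖²_{Σ⁻¹}) / √((2π)^q det Σ)] · exp(−½‖Pτ̂ − τ*_n(x)‖²_{Σ⁻¹}), where the first factor does not depend on x and the second depends on τ̂ only through Pτ̂. -/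
/-- The index set for the TDOA space: pairs `(j, i)` with `0 ≤ i < j ≤ n`.
The first component of the underlying pair is `j`, the second is `i`. -/
abbrev PairIdx (n : ℕ) : Type := {p : Fin (n + 1) × Fin (n + 1) // p.2 < p.1}

/-- The TDOA `τ_{ji}(x) = ‖x − m_j‖ − ‖x − m_i‖` for the pair `(j,i)`, collected into
the complete TDOA map `τ*_n : ℝ³ → ℝ^q` (propagation speed normalized to 1). -/
noncomputable def tdoaMap (n : ℕ) (m : Fin (n + 1) → EuclideanSpace ℝ (Fin 3))
    (x : EuclideanSpace ℝ (Fin 3)) : PairIdx n → ℝ :=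
  fun p => ‖x - m p.1.1‖ - ‖x - m p.1.2‖

/-- The linear subspace `V_n ⊂ ℝ^q` cut out by the zero-sum conditions
`−τ_{i0} + τ_{j0} − τ_{ji} = 0` for all `0 < i < j ≤ n`. -/
def Vn (n : ℕ) : Submodule ℝ (PairIdx n → ℝ) where
  carrier := {τ | ∀ (i j : Fin (n + 1)) (h0 : (0 : Fin (n + 1)) < i) (hij : i < j),
    -τ ⟨(i, 0), h0⟩ + τ ⟨(j, 0), lt_trans h0 hij⟩ - τ ⟨(j, i), hij⟩ = 0}
  add_mem' := by
    intro a b ha hb i j h0 hij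
    have h1 := ha i j h0 hij
    have h2 := hb i j h0 hij
    simp only [Pi.add_apply]
    linarith
  zero_mem' := by
    intro i j h0 hij
    simp
  smul_mem' := by
    intro c a ha i j h0 hij
    have h1 := ha i j h0 hij
    simp only [Pi.smul_apply, smul_eq_mul]
    linear_combination c * h1

open Matrix

/-- The scalar product `⟨v, w⟩_{Σ⁻¹} = vᵀ Σ⁻¹ w` on `ℝ^q` defined by the Fisher
matrix `Σ⁻¹` of a covariance matrix `Σ`. -/
noncomputable def mInner {ι : Type*} [Fintype ι] [DecidableEq ι]
    (Sg : Matrix ι ι ℝ) (v w : ι → ℝ) : ℝ :=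
  v ⬝ᵥ (Sg⁻¹ *ᵥ w)

/-!
The noise-free TDOA vector `τ*_n(x)` satisfies the zero-sum conditions, so it lies in
`V_n = range P` and is fixed by `P`. Hence `τ̂ − τ*_n(x) = (τ̂ − Pτ̂) + P(τ̂ − τ*_n(x))`, and
the two summands are `Σ⁻¹`-orthogonal because `P` is an idempotent self-adjoint map. Pythagoras
splits the Mahalanobis norm into two squares, and `exp (a + b) = exp a * exp b` splits the density.
-/

theorem pairDiff_mem_Vn {n : ℕ} (f : Fin (n + 1) → ℝ) :
    (fun p : PairIdx n => f p.1.1 - f p.1.2) ∈ Vn n := by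
  intro i j _ _
  ring

theorem tdoaMap_mem_Vn (n : ℕ) (m : Fin (n + 1) → EuclideanSpace ℝ (Fin 3))
    (x : EuclideanSpace ℝ (Fin 3)) : tdoaMap n m x ∈ Vn n :=
  pairDiff_mem_Vn fun i => ‖x - m i‖

namespace LinearMap.BilinForm

variable {R E : Type*} [CommRing R] [AddCommGroup E] [Module R E]
  (B : LinearMap.BilinForm R E) {P : E →ₗ[R] E}

theorem apply_add_self_of_isOrtho {a b : E} (hab : B a b = 0) (hba : B b a = 0) :
    B (a + b) (a + b) = B a a + B b b := by
  simp only [map_add, LinearMap.add_apply, hab, hba, add_zero, zero_add]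

theorem apply_sub_self_eq_add_of_proj (hPidem : ∀ v, P (P v) = P v)
    (hPsa : ∀ v w, B (P v) w = B v (P w)) {t : E} (ht : P t = t) (v : E) :
    B (v - t) (v - t) = B (v - P v) (v - P v) + B (P v - t) (P v - t) := by
  have hker : P (v - P v) = 0 := by rw [map_sub, hPidem, sub_self]
  have hrange : P v - t = P (v - t) := by rw [map_sub, ht]
  rw [← sub_add_sub_cancel v (P v) t]
  refine B.apply_add_self_of_isOrtho ?_ ?_ <;> rw [hrange]
  · rw [← hPsa, hker, LinearMap.map_zero₂]
  · rw [hPsa, hker, map_zero]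

end LinearMap.BilinForm

theorem mInner_eq_toBilin' {ι : Type*} [Fintype ι] [DecidableEq ι] (Sg : Matrix ι ι ℝ)
    (v w : ι → ℝ) : mInner Sg v w = Matrix.toBilin' Sg⁻¹ v w :=
  (Matrix.toBilin'_apply' _ v w).symm

theorem gaussian_density_fisher_neyman_factorization_general (n : ℕ)
    (m : Fin (n + 1) → EuclideanSpace ℝ (Fin 3))
    (Sg : Matrix (PairIdx n) (PairIdx n) ℝ)
    (P : (PairIdx n → ℝ) →ₗ[ℝ] (PairIdx n → ℝ))
    (hPidem : ∀ v, P (P v) = P v)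
    (hPrange : LinearMap.range P = Vn n)
    (hPsa : ∀ v w, mInner Sg (P v) w = mInner Sg v (P w))
    (x : EuclideanSpace ℝ (Fin 3)) (τh : PairIdx n → ℝ) :
    Real.exp (-(1 / 2) * mInner Sg (τh - tdoaMap n m x) (τh - tdoaMap n m x)) /
        Real.sqrt ((2 * Real.pi) ^ (Fintype.card (PairIdx n)) * Sg.det) =
      (Real.exp (-(1 / 2) * mInner Sg (τh - P τh) (τh - P τh)) /
          Real.sqrt ((2 * Real.pi) ^ (Fintype.card (PairIdx n)) * Sg.det)) *
        Real.exp (-(1 / 2) * mInner Sg (P τh - tdoaMap n m x) (P τh - tdoaMap n m x)) := by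
  have hfix : P (tdoaMap n m x) = tdoaMap n m x := by
    obtain ⟨u, hu⟩ : tdoaMap n m x ∈ LinearMap.range P := hPrange ▸ tdoaMap_mem_Vn n m x
    rw [← hu, hPidem]
  have hpyth := (Matrix.toBilin' Sg⁻¹).apply_sub_self_eq_add_of_proj hPidem
    (by simpa only [mInner_eq_toBilin'] using hPsa) hfix τh
  simp only [← mInner_eq_toBilin'] at hpyth
  rw [hpyth, mul_add, Real.exp_add]
  ring

/-- Fisher–Neyman factorization witnessing that the projection `Pτ̂` is
a sufficient statistic for the source position `x`: for every `x ∈ ℝ³` and every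
`τ̂ ∈ ℝ^q`, the Gaussian density factorizes as
`exp(−½‖τ̂ − τ*_n(x)‖²_{Σ⁻¹}) / √((2π)^q det Σ)
  = [exp(−½‖τ̂ − Pτ̂‖²_{Σ⁻¹}) / √((2π)^q det Σ)] · exp(−½‖Pτ̂ − τ*_n(x)‖²_{Σ⁻¹})`,
where the first factor does not depend on `x` and the second depends on `τ̂` only
through `Pτ̂`. -/
theorem gaussian_density_fisher_neyman_factorization (n : ℕ) (hn : 2 ≤ n)
    (m : Fin (n + 1) → EuclideanSpace ℝ (Fin 3))
    (Sg : Matrix (PairIdx n) (PairIdx n) ℝ) (hSgSymm : Sg.IsSymm) (hSgPd : Sg.PosDef)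
    (P : (PairIdx n → ℝ) →ₗ[ℝ] (PairIdx n → ℝ))
    (hPidem : ∀ v, P (P v) = P v)
    (hPrange : LinearMap.range P = Vn n)
    (hPsa : ∀ v w, mInner Sg (P v) w = mInner Sg v (P w))
    (x : EuclideanSpace ℝ (Fin 3)) (τh : PairIdx n → ℝ) :
    Real.exp (-(1 / 2) * mInner Sg (τh - tdoaMap n m x) (τh - tdoaMap n m x)) /
        Real.sqrt ((2 * Real.pi) ^ (Fintype.card (PairIdx n)) * Sg.det) =
      (Real.exp (-(1 / 2) * mInner Sg (τh - P τh) (τh - P τh)) /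
          Real.sqrt ((2 * Real.pi) ^ (Fintype.card (PairIdx n)) * Sg.det)) *
        Real.exp (-(1 / 2) * mInner Sg (P τh - tdoaMap n m x) (P τh - tdoaMap n m x)) :=
  gaussian_density_fisher_neyman_factorization_general n m Sg P hPidem hPrange hPsa x τh
end

section
/- Let Σ be a symmetric positive definite q×q real matrix and P a q×q real matrix satisfying P·P = P and Σ⁻¹·P = Pᵀ·Σ⁻¹. Then Σ ⪰ Σ' where Σ' := P·Σ·Pᵀ; that is, the matrix Σ − P·Σ·Pᵀ is positive semidefinite. -/
open Matrix

/-! The conditions say that `P` is an oblique projection which is self-adjoint for the inner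
product `⟨u, v⟩ = uᵀ Σ⁻¹ v`, i.e. `P Σ = Σ Pᵀ`. Then `P Σ Pᵀ = P Σ` and
`Σ - P Σ Pᵀ = (1 - P) Σ (1 - P)ᵀ`, a congruence of the positive definite `Σ`. -/

namespace Matrix

variable {n α : Type*} [Fintype n] [DecidableEq n]

theorem mul_eq_mul_of_inv_mul_eq_mul_inv [CommRing α] {S P Q : Matrix n n α} [Invertible S]
    (h : S⁻¹ * P = Q * S⁻¹) : P * S = S * Q := by
  rw [inv_mul_eq_iff_eq_mul_of_invertible, ← Matrix.mul_assoc] at h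
  rw [h, inv_mul_cancel_right_of_invertible]

theorem sub_mul_mul_transpose_of_isIdempotentElem [CommRing α] {S P : Matrix n n α}
    (hP : IsIdempotentElem P) (hPS : P * S = S * Pᵀ) :
    S - P * S * Pᵀ = (1 - P) * S * (1 - P)ᵀ := by
  have hPSP : P * S * Pᵀ = P * S := by
    rw [hPS, Matrix.mul_assoc, ← transpose_mul, hP.eq]
  rw [transpose_sub, transpose_one, Matrix.sub_mul, Matrix.sub_mul, Matrix.mul_sub,
    Matrix.mul_sub, Matrix.one_mul, Matrix.mul_one, Matrix.mul_one, hPSP, ← hPS]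
  abel

theorem PosSemidef.sub_mul_mul_transpose {S P : Matrix n n ℝ} (hS : S.PosSemidef)
    (hP : IsIdempotentElem P) (hPS : P * S = S * Pᵀ) : (S - P * S * Pᵀ).PosSemidef := by
  rw [sub_mul_mul_transpose_of_isIdempotentElem hP hPS]
  simpa only [conjTranspose_eq_transpose_of_trivial] using hS.mul_mul_conjTranspose_same (1 - P)

end Matrix

theorem covariance_dominates_denoised_covariance_general (q : ℕ)
    (Sg P : Matrix (Fin q) (Fin q) ℝ) (hSgPd : Sg.PosDef)
    (hPidem : P * P = P) (hPsa : Sg⁻¹ * P = Pᵀ * Sg⁻¹) :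
    ∀ v : Fin q → ℝ, 0 ≤ v ⬝ᵥ ((Sg - P * Sg * Pᵀ) *ᵥ v) := by
  have : Invertible Sg := hSgPd.isUnit.invertible
  have hPSg : P * Sg = Sg * Pᵀ := mul_eq_mul_of_inv_mul_eq_mul_inv hPsa
  intro v
  simpa only [star_trivial] using
    (hSgPd.posSemidef.sub_mul_mul_transpose hPidem hPSg).dotProduct_mulVec_nonneg v

/-- Let `Σ` be a symmetric positive definite `q×q` real matrix and `P`
a `q×q` real matrix satisfying `P·P = P` and `Σ⁻¹·P = Pᵀ·Σ⁻¹`. Then `Σ ⪰ Σ'` where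
`Σ' := P·Σ·Pᵀ`; that is, the matrix `Σ − P·Σ·Pᵀ` is positive semidefinite
(`vᵀ (Σ − Σ') v ≥ 0` for all `v`). -/
theorem covariance_dominates_denoised_covariance (q : ℕ)
    (Sg P : Matrix (Fin q) (Fin q) ℝ) (hSgSymm : Sg.IsSymm) (hSgPd : Sg.PosDef)
    (hPidem : P * P = P) (hPsa : Sg⁻¹ * P = Pᵀ * Sg⁻¹) :
    ∀ v : Fin q → ℝ, 0 ≤ v ⬝ᵥ ((Sg - P * Sg * Pᵀ) *ᵥ v) :=
  covariance_dominates_denoised_covariance_general q Sg P hSgPd hPidem hPsa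
end

section
/- If the set S of deleted index pairs contains no pair of the form (j,0) (i.e., all n TDOAs relative to the reference sensor m₀ are retained), then the restriction of p_S to V_n is injective; hence p_S restricts to a linear isomorphism from V_n onto V_S = p_S(V_n), and V_S has dimension n, so the full vector of q denoised TDOAs can be uniquely recovered from its retained coordinates via the zero-sum conditions. -/
/-- The coordinate-deleting linear map `p_S : ℝ^q → ℝ^{q−s}`, which forgets the
coordinates whose index pair lies in the deleted set `S`. -/
def pS (n : ℕ) (S : Finset (PairIdx n)) :
    (PairIdx n → ℝ) →ₗ[ℝ] ({p : PairIdx n // p ∉ S} → ℝ) :=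
  LinearMap.funLeft ℝ ℝ Subtype.val

/-!
The zero-sum conditions give `τ_{ji} = τ_{j0} - τ_{i0}` for `0 < i < j`, so a vector of `V_n` is
determined by its `n` reference coordinates `τ_{j0}`, all of which `p_S` retains. Conversely every
choice of reference coordinates is realised by the differences `t_j - t_i` of arrival times `t`
with `t_0 = 0`, so `V_n ≅ ℝ^n`.
-/

namespace Vn

variable {n : ℕ}

lemma eq_zero_of_ref_eq_zero {τ : PairIdx n → ℝ} (hτ : τ ∈ Vn n)
    (href : ∀ (j : Fin (n + 1)) (hj : 0 < j), τ ⟨(j, 0), hj⟩ = 0) : τ = 0 := by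
  funext ⟨⟨j, i⟩, hij⟩
  rcases (Fin.zero_le i).eq_or_lt with rfl | hi
  · exact href j hij
  · have hsum := hτ i j hi hij
    rw [href i hi, href j (hi.trans hij)] at hsum
    simpa using hsum

def ofArrivalTimes (t : Fin (n + 1) → ℝ) : Vn n :=
  ⟨fun p => t p.1.1 - t p.1.2, fun _ _ _ _ => by ring⟩

variable (n) in
def refCoords : Vn n →ₗ[ℝ] (Fin n → ℝ) :=
  LinearMap.funLeft ℝ ℝ (fun j : Fin n => (⟨(j.succ, 0), j.succ_pos⟩ : PairIdx n)) ∘ₗ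
    (Vn n).subtype

lemma refCoords_injective : Function.Injective (refCoords n) := by
  rw [← LinearMap.ker_eq_bot, LinearMap.ker_eq_bot']
  intro τ hτ
  refine Subtype.ext (eq_zero_of_ref_eq_zero τ.2 fun j hj => ?_)
  obtain ⟨k, rfl⟩ := Fin.exists_succ_eq.mpr hj.ne'
  exact congrFun hτ k

lemma refCoords_ofArrivalTimes (c : Fin n → ℝ) :
    refCoords n (ofArrivalTimes (Fin.cons 0 c)) = c := by
  ext j
  simp [refCoords, ofArrivalTimes, LinearMap.funLeft_apply]

lemma finrank_eq : Module.finrank ℝ (Vn n) = n := by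
  have e := LinearEquiv.ofBijective (refCoords n)
    ⟨refCoords_injective, fun c => ⟨_, refCoords_ofArrivalTimes c⟩⟩
  simpa using e.finrank_eq

lemma disjoint_ker_pS {S : Finset (PairIdx n)} (hS : ∀ p ∈ S, (p : PairIdx n).1.2 ≠ 0) :
    Disjoint (Vn n) (LinearMap.ker (pS n S)) := by
  refine Submodule.disjoint_def.mpr fun τ hτ hker => eq_zero_of_ref_eq_zero hτ fun j hj => ?_
  exact congrFun hker ⟨⟨(j, 0), hj⟩, fun hmem => hS _ hmem rfl⟩

end Vn

theorem pS_injective_on_Vn_of_reference_retained_general (n : ℕ)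
    (S : Finset (PairIdx n)) (hS : ∀ p ∈ S, (p : PairIdx n).1.2 ≠ 0) :
    Set.InjOn (pS n S) (Vn n : Set (PairIdx n → ℝ)) ∧
      Module.finrank ℝ ((Vn n).map (pS n S)) = n := by
  have hinj : Set.InjOn (pS n S) (Vn n) :=
    LinearMap.injOn_of_disjoint_ker le_rfl (Vn.disjoint_ker_pS hS)
  have hbij : Function.Bijective ((pS n S).submoduleMap (Vn n)) :=
    ⟨LinearMap.submoduleMap_injective_of_injOn hinj, LinearMap.submoduleMap_surjective _ _⟩
  exact ⟨hinj, (LinearEquiv.ofBijective _ hbij).finrank_eq.symm.trans Vn.finrank_eq⟩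

/-- If the set `S` of deleted index pairs contains no pair of the
form `(j, 0)` (i.e., all `n` TDOAs relative to the reference sensor `m₀` are
retained), then the restriction of `p_S` to `V_n` is injective; hence `p_S` restricts
to a linear isomorphism from `V_n` onto `V_S = p_S(V_n)`, and `V_S` has dimension `n`
(so the full vector of `q` denoised TDOAs can be uniquely recovered from its retained
coordinates via the zero-sum conditions). -/
theorem pS_injective_on_Vn_of_reference_retained (n : ℕ) (hn : 2 ≤ n)
    (S : Finset (PairIdx n)) (hS : ∀ p ∈ S, (p : PairIdx n).1.2 ≠ 0) :
    Set.InjOn (pS n S) (Vn n : Set (PairIdx n → ℝ)) ∧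
      Module.finrank ℝ ((Vn n).map (pS n S)) = n :=
  pS_injective_on_Vn_of_reference_retained_general n S hS
end
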